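/- arXiv:2412.01047 — 2 statements merged into one kernel-verified Lean document; each statement's English description precedes it below -/
import Mathlib

section
/- Let ι be a finite index type, let (G_i)_{i ∈ ι} be a family of finite groups, and let k be a natural number. Form the free product Γ = F_k ∗ (∗_{i ∈ ι} G_i), where F_k is the free group on k generators (i.e., Γ is the group coproduct of the family consisting of F_k together with the groups G_i). Let φ : Γ → Π_{i ∈ ι} G_i be the canonical homomorphism determined by sending F_k to the trivial element and sending each G_i into the product by its coordinate embedding. Then φ is surjective, its kernel ker(φ) has finite index in Γ, and ker(φ) is a free group. -/
/-- The family consisting of the free group on `k` generators (at index `none`) together with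
the groups `G i` (at indices `some i`). -/
def freeProdFamily {ι : Type} (G : ι → Type) (k : ℕ) : Option ι → Type
  | none => FreeGroup (Fin k)
  | some i => G i

instance freeProdFamily.instGroup {ι : Type} (G : ι → Type) [∀ i, Group (G i)] (k : ℕ) :
    ∀ j, Group (freeProdFamily G k j)
  | none => inferInstanceAs (Group (FreeGroup (Fin k)))
  | some i => inferInstanceAs (Group (G i))

/-- The canonical homomorphism from the free product `F_k ∗ (∗_i G_i)` to the direct product
`Π i, G i`, sending `F_k` to the identity and each `G i` to the product by its coordinate
embedding. -/
def freeProdToPi {ι : Type} [DecidableEq ι] (G : ι → Type) [∀ i, Group (G i)] (k : ℕ) :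
    Monoid.CoprodI (freeProdFamily G k) →* ∀ i, G i :=
  Monoid.CoprodI.lift fun j =>
    match j with
    | none => 1
    | some i => MonoidHom.mulSingle G i

namespace FreeProdKer

open CategoryTheory CategoryTheory.ActionCategory

variable {ι : Type} [DecidableEq ι] (G : ι → Type) [∀ i, Group (G i)] (k : ℕ)

abbrev Gam := Monoid.CoprodI (freeProdFamily G k)

noncomputable instance act : MulAction (Gam G k) (∀ i, G i) :=
  MulAction.compHom _ (freeProdToPi G k)

def ofSome (i : ι) : G i →* Gam G k :=
  Monoid.CoprodI.of (M := freeProdFamily G k) (i := some i)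

def ofNone : FreeGroup (Fin k) →* Gam G k :=
  Monoid.CoprodI.of (M := freeProdFamily G k) (i := none)

lemma phi_ofSome (i : ι) (g : G i) :
    freeProdToPi G k (ofSome G k i g) = Pi.mulSingle i g := by
  simp only [freeProdToPi, ofSome, Monoid.CoprodI.lift_of]
  rfl

lemma phi_ofNone (x : FreeGroup (Fin k)) : freeProdToPi G k (ofNone G k x) = 1 := by
  simp only [freeProdToPi, ofNone, Monoid.CoprodI.lift_of]
  rfl

lemma smul_def (γ : Gam G k) (q : ∀ i, G i) : γ • q = freeProdToPi G k γ * q := rfl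

lemma ofSome_smul (i : ι) (g : G i) (q : ∀ i, G i) :
    ofSome G k i g • q = Pi.mulSingle i g * q := by
  rw [smul_def, phi_ofSome]

lemma ofNone_smul (x : FreeGroup (Fin k)) (q : ∀ i, G i) : ofNone G k x • q = q := by
  rw [smul_def, phi_ofNone, one_mul]


/-- The generating quiver of the action groupoid. -/
def genArrow (a b : ActionCategory (Gam G k) (∀ i, G i)) : Type :=
  (Fin k × PLift (b.back = a.back)) ⊕
    {i : ι // a.back i = 1 ∧ b.back i ≠ 1 ∧ Pi.mulSingle i (b.back i) * a.back = b.back}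

noncomputable def genOf {a b : ActionCategory (Gam G k) (∀ i, G i)} (e : genArrow G k a b) : a ⟶ b :=
  match e with
  | Sum.inl (x, h) =>
      ⟨ofNone G k (FreeGroup.of x), by
        show ofNone G k (FreeGroup.of x) • a.back = b.back
        rw [ofNone_smul]; exact h.down.symm⟩
  | Sum.inr ⟨i, _, _, h3⟩ =>
      ⟨ofSome G k i (b.back i), by
        show ofSome G k i (b.back i) • a.back = b.back
        rw [ofSome_smul]; exact h3⟩


lemma mulSingle_base (i : ι) (q : ∀ j, G j) :
    Pi.mulSingle i (q i) * (Pi.mulSingle i (q i)⁻¹ * q) = q := by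
  rw [← mul_assoc, ← Pi.mulSingle_mul, mul_inv_cancel, Pi.mulSingle_one, one_mul]

lemma base_apply (i : ι) (q : ∀ j, G j) : (Pi.mulSingle i (q i)⁻¹ * q) i = 1 := by
  simp

variable {X : Type} [Group X]
variable (f : ∀ a b : ActionCategory (Gam G k) (∀ i, G i), genArrow G k a b → X)

open scoped Classical in
noncomputable def pot (i : ι) (q : ∀ j, G j) : X :=
  if h : q i = 1 then 1
  else f ⟨(), Pi.mulSingle i (q i)⁻¹ * q⟩ ⟨(), q⟩
    (Sum.inr ⟨i, base_apply G i q, h, mulSingle_base G i q⟩)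


section Semidirect

lemma sd_left_mul_apply (u v : ((∀ i, G i) → X) ⋊[mulAutArrow] Gam G k) (b : ∀ i, G i) :
    (u * v).left b = u.left b * v.left (u.right⁻¹ • b) := by
  rw [SemidirectProduct.mul_left]
  rfl

lemma sd_left_inv_apply (u : ((∀ i, G i) → X) ⋊[mulAutArrow] Gam G k) (b : ∀ i, G i) :
    (u⁻¹).left b = (u.left (u.right • b))⁻¹ := by
  rw [SemidirectProduct.inv_left]
  show (u.left⁻¹) ((u.right⁻¹)⁻¹ • b) = _
  rw [inv_inv]
  rfl

end Semidirect

open scoped Classical in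
noncomputable def chiSome (i : ι) : G i →* ((∀ i, G i) → X) ⋊[mulAutArrow] Gam G k where
  toFun g :=
    ⟨fun b => pot G k f i b * (pot G k f i (Pi.mulSingle i g⁻¹ * b))⁻¹, ofSome G k i g⟩
  map_one' := by
    refine SemidirectProduct.ext ?_ (by simp [map_one])
    funext b
    show pot G k f i b * (pot G k f i (Pi.mulSingle i (1 : G i)⁻¹ * b))⁻¹ = (1 : (∀ i, G i) → X) b
    simp
  map_mul' g h := by
    refine SemidirectProduct.ext ?_ (by simp [map_mul, SemidirectProduct.mul_right])
    funext b
    rw [sd_left_mul_apply]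
    show pot G k f i b * (pot G k f i (Pi.mulSingle i (g * h)⁻¹ * b))⁻¹ =
      (pot G k f i b * (pot G k f i (Pi.mulSingle i g⁻¹ * b))⁻¹) *
      (pot G k f i ((ofSome G k i g)⁻¹ • b) *
        (pot G k f i (Pi.mulSingle i h⁻¹ * ((ofSome G k i g)⁻¹ • b)))⁻¹)
    have hr : (ofSome G k i g)⁻¹ • b = Pi.mulSingle i g⁻¹ * b := by
      rw [← map_inv, ofSome_smul]
    rw [hr, mul_inv_rev, Pi.mulSingle_mul, mul_assoc]
    simp [mul_assoc]

noncomputable def chiNone : FreeGroup (Fin k) →* ((∀ i, G i) → X) ⋊[mulAutArrow] Gam G k :=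
  FreeGroup.lift fun x =>
    ⟨fun b => f ⟨(), b⟩ ⟨(), b⟩ (Sum.inl (x, PLift.up rfl)), ofNone G k (FreeGroup.of x)⟩

noncomputable def bigHom : Gam G k →* ((∀ i, G i) → X) ⋊[mulAutArrow] Gam G k :=
  Monoid.CoprodI.lift fun j =>
    match j with
    | none => chiNone G k f
    | some i => chiSome G k f i

lemma bigHom_ofSome (i : ι) (g : G i) :
    bigHom G k f (ofSome G k i g) = chiSome G k f i g := by
  exact Monoid.CoprodI.lift_of _ g

lemma bigHom_ofNone (x : FreeGroup (Fin k)) :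
    bigHom G k f (ofNone G k x) = chiNone G k f x := by
  exact Monoid.CoprodI.lift_of (M := freeProdFamily G k) _ (i := none) x

lemma bigHom_right (γ : Gam G k) : (bigHom G k f γ).right = γ := by
  have h : (SemidirectProduct.rightHom).comp (bigHom G k f) = MonoidHom.id (Gam G k) := by
    apply Monoid.CoprodI.ext_hom
    intro j
    match j with
    | none =>
      refine FreeGroup.ext_hom _ _ fun x => ?_
      show (bigHom G k f (ofNone G k (FreeGroup.of x))).right = ofNone G k (FreeGroup.of x)
      rw [bigHom_ofNone, chiNone, FreeGroup.lift_apply_of]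
    | some i =>
      refine MonoidHom.ext fun (g : G i) => ?_
      show (bigHom G k f (ofSome G k i g)).right = ofSome G k i g
      rw [bigHom_ofSome]
      rfl
  exact DFunLike.congr_fun h γ


noncomputable def bigFunctor :
    ActionCategory (Gam G k) (∀ i, G i) ⥤ CategoryTheory.SingleObj X :=
  uncurry (bigHom G k f) (bigHom_right G k f)

lemma bigFunctor_map {a b : ActionCategory (Gam G k) (∀ i, G i)} (e : genArrow G k a b) :
    (bigFunctor G k f).map (genOf G k e) = f a b e := by
  obtain ⟨⟨⟩, (qa : ∀ i, G i)⟩ := a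
  obtain ⟨⟨⟩, (qb : ∀ i, G i)⟩ := b
  cases e with
  | inl pr =>
    obtain ⟨x, ⟨h⟩⟩ := pr
    have h' : qb = qa := h
    subst h'
    have key : (bigHom G k f (ofNone G k (FreeGroup.of x))).left qb
        = f ⟨(), qb⟩ ⟨(), qb⟩ (Sum.inl (x, PLift.up rfl)) := by
      rw [bigHom_ofNone, chiNone, FreeGroup.lift_apply_of]
    exact key
  | inr pr =>
    obtain ⟨i, h1, h2, h3⟩ := pr
    have h1' : qa i = 1 := h1
    have h2' : qb i ≠ 1 := h2
    have h3' : Pi.mulSingle i (qb i) * qa = qb := h3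
    have ha : Pi.mulSingle i (qb i)⁻¹ * qb = qa := by
      have hx : Pi.mulSingle i (qb i)⁻¹ * (Pi.mulSingle i (qb i) * qa) = qa := by
        rw [← mul_assoc, ← Pi.mulSingle_mul, inv_mul_cancel, Pi.mulSingle_one, one_mul]
      rw [h3'] at hx
      exact hx
    have key : (bigHom G k f (ofSome G k i (qb i))).left qb
        = f ⟨(), qa⟩ ⟨(), qb⟩ (Sum.inr ⟨i, h1, h2, h3⟩) := by
      rw [bigHom_ofSome]
      show pot G k f i qb * (pot G k f i (Pi.mulSingle i (qb i)⁻¹ * qb))⁻¹ = _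
      rw [ha]
      have hqa : pot G k f i qa = 1 := by rw [pot, dif_pos h1']
      have hqb : pot G k f i qb = f ⟨(), qa⟩ ⟨(), qb⟩ (Sum.inr ⟨i, h1, h2, h3⟩) := by
        rw [pot, dif_neg h2']
        subst ha
        rfl
      rw [hqa, hqb, inv_one, mul_one]
    exact key


lemma harg_lemma (i : ι) (g : G i) (b : ∀ j, G j) :
    b i * ((Pi.mulSingle i g⁻¹ * b) i)⁻¹ = g := by
  have hai : (Pi.mulSingle i g⁻¹ * b) i = g⁻¹ * b i := by simp
  rw [hai]
  group

section Unique

variable (E : ActionCategory (Gam G k) (∀ i, G i) ⥤ CategoryTheory.SingleObj X)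

lemma Emap_eq : ∀ {a b : ActionCategory (Gam G k) (∀ i, G i)} (p : a ⟶ b),
    E.map p = (curry E p.val).left b.back := by
  apply ActionCategory.cases
  intros
  rfl

variable (hE : ∀ (a b) (e : genArrow G k a b), E.map (genOf G k e) = f a b e)

include hE in
lemma curry_pot (i : ι) (q : ∀ j, G j) :
    (curry E (ofSome G k i (q i))).left q = pot G k f i q := by
  by_cases h : q i = 1
  · rw [h, map_one, map_one]
    rw [pot, dif_pos h]
    rfl
  · have h1 := hE _ _ (Sum.inr ⟨i, base_apply G i q, h, mulSingle_base G i q⟩ :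
      genArrow G k ⟨(), Pi.mulSingle i (q i)⁻¹ * q⟩ ⟨(), q⟩)
    replace h1 := (Emap_eq G k E _).symm.trans h1
    have h2 : pot G k f i q = f ⟨(), Pi.mulSingle i (q i)⁻¹ * q⟩ ⟨(), q⟩
        (Sum.inr ⟨i, base_apply G i q, h, mulSingle_base G i q⟩) := by
      rw [pot, dif_neg h]
    rw [h2]
    exact h1

include hE in
lemma curry_eq : curry E = bigHom G k f := by
  apply Monoid.CoprodI.ext_hom
  intro j
  match j with
  | none =>
    refine FreeGroup.ext_hom _ _ fun x => ?_
    show curry E (ofNone G k (FreeGroup.of x)) = bigHom G k f (ofNone G k (FreeGroup.of x))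
    rw [bigHom_ofNone, chiNone, FreeGroup.lift_apply_of]
    refine SemidirectProduct.ext ?_ rfl
    funext b
    have h1 := hE _ _ (Sum.inl (x, PLift.up rfl) : genArrow G k ⟨(), b⟩ ⟨(), b⟩)
    replace h1 := (Emap_eq G k E _).symm.trans h1
    exact h1
  | some i =>
    refine MonoidHom.ext fun (g : G i) => ?_
    show curry E (ofSome G k i g) = bigHom G k f (ofSome G k i g)
    rw [bigHom_ofSome]
    refine SemidirectProduct.ext ?_ rfl
    funext b
    show (curry E (ofSome G k i g)).left b
        = pot G k f i b * (pot G k f i (Pi.mulSingle i g⁻¹ * b))⁻¹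
    have hg : ofSome G k i g
        = ofSome G k i (b i) * (ofSome G k i ((Pi.mulSingle i g⁻¹ * b) i))⁻¹ := by
      rw [← map_inv, ← map_mul, harg_lemma G i g b]
    rw [hg, map_mul, map_inv, sd_left_mul_apply, sd_left_inv_apply]
    have hr1 : ((curry E (ofSome G k i (b i))).right)⁻¹ • b = Pi.mulSingle i (b i)⁻¹ * b := by
      show (ofSome G k i (b i))⁻¹ • b = _
      rw [← map_inv, ofSome_smul]
    rw [hr1]
    have hr2 : ((curry E (ofSome G k i ((Pi.mulSingle i g⁻¹ * b) i))).right)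
        • (Pi.mulSingle i (b i)⁻¹ * b) = Pi.mulSingle i g⁻¹ * b := by
      show (ofSome G k i ((Pi.mulSingle i g⁻¹ * b) i)) • _ = _
      rw [ofSome_smul, ← mul_assoc, ← Pi.mulSingle_mul]
      congr 2
      simp [mul_assoc]
    rw [hr2]
    rw [curry_pot G k f E hE i b]
    have := curry_pot G k f E hE i (Pi.mulSingle i g⁻¹ * b)
    rw [this]

include hE in
lemma functor_eq : E = bigFunctor G k f := by
  have hc := curry_eq G k f E hE
  apply CategoryTheory.Functor.hext
  · intro x
    exact Subsingleton.elim _ _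
  · refine ActionCategory.cases ?_
    intro t g
    simp only [bigFunctor, ← hc, uncurry_map, curry_apply_left, coe_back, homOfPair.val]
    apply heq_of_eq
    exact (Emap_eq G k E _).trans (by rw [hc]; rfl)

end Unique


noncomputable def freeGroupoid : IsFreeGroupoid (ActionCategory (Gam G k) (∀ i, G i)) where
  quiverGenerators := ⟨fun a b => genArrow G k a b⟩
  of := fun {a b} e => genOf G k e
  unique_lift := by
    intro X _ f
    exact ⟨bigFunctor G k (fun a b e => f e),
      fun a b e => bigFunctor_map G k (fun a b e => f e) e,
      fun E hE => functor_eq G k (fun a b e => f e) E (fun a b e => hE a b e)⟩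

end FreeProdKer

/-- The canonical homomorphism `φ : F_k ∗ (∗_i G_i) →* Π_i G_i` (with `ι` finite and each `G i`
finite) is surjective, its kernel has finite index, and its kernel is a free group. -/
theorem freeProdToPi_surjective_ker_finiteIndex_free
    {ι : Type} [Finite ι] [DecidableEq ι] (G : ι → Type) [∀ i, Group (G i)]
    [∀ i, Finite (G i)] (k : ℕ) :
    Function.Surjective (freeProdToPi G k) ∧
      (MonoidHom.ker (freeProdToPi G k)).FiniteIndex ∧
      ∃ S : Type, Nonempty (FreeGroup S ≃* MonoidHom.ker (freeProdToPi G k)) := by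
  classical
  have : Fintype ι := Fintype.ofFinite ι
  have hsurj : Function.Surjective (freeProdToPi G k) := by
    have key : ∀ s : Finset ι, ∀ q : ∀ i, G i, (∀ i ∉ s, q i = 1) →
        ∃ γ, freeProdToPi G k γ = q := by
      intro s
      induction s using Finset.induction_on with
      | empty =>
        intro q hq
        refine ⟨1, ?_⟩
        rw [map_one]
        funext i
        exact (hq i (Finset.notMem_empty i)).symm
      | insert _ _ hj ih =>
        rename_i j s
        intro q hq
        obtain ⟨γ, hγ⟩ := ih (Pi.mulSingle j (q j)⁻¹ * q) (by
          intro i hi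
          by_cases hij : i = j
          · subst hij
            simp
          · have : q i = 1 := hq i (by simp [hij, hi])
            simp [Pi.mulSingle_apply, hij, this])
        refine ⟨FreeProdKer.ofSome G k j (q j) * γ, ?_⟩
        rw [map_mul, hγ, FreeProdKer.phi_ofSome, FreeProdKer.mulSingle_base]
    intro q
    exact key Finset.univ q (fun i hi => absurd (Finset.mem_univ i) hi)
  refine ⟨hsurj, ?_, ?_⟩
  · refine ⟨?_⟩
    have hcard : (MonoidHom.ker (freeProdToPi G k)).index = Nat.card (∀ i, G i) := by
      rw [Subgroup.index_eq_card]
      exact Nat.card_congr (QuotientGroup.quotientKerEquivOfSurjective _ hsurj).toEquiv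
    rw [hcard]
    exact Nat.card_ne_zero.mpr ⟨⟨1⟩, inferInstance⟩
  · haveI : MulAction.IsPretransitive (FreeProdKer.Gam G k) (∀ i, G i) := by
      constructor
      intro x y
      obtain ⟨γ, hγ⟩ := hsurj (y * x⁻¹)
      exact ⟨γ, by rw [FreeProdKer.smul_def, hγ, inv_mul_cancel_right]⟩
    haveI := FreeProdKer.freeGroupoid G k
    let obj : CategoryTheory.ActionCategory (FreeProdKer.Gam G k) (∀ i, G i) :=
      CategoryTheory.ActionCategory.objEquiv (FreeProdKer.Gam G k) (∀ i, G i) (1 : ∀ i, G i)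
    have hc : CategoryTheory.IsConnected
        (CategoryTheory.ActionCategory (FreeProdKer.Gam G k) (∀ i, G i)) := inferInstance
    have hc' : @CategoryTheory.IsConnected
        (CategoryTheory.ActionCategory (FreeProdKer.Gam G k) (∀ i, G i))
        CategoryTheory.Groupoid.toCategory := by
      with_unfolding_all exact hc
    have hfree := IsFreeGroupoid.endIsFreeOfConnectedFree obj
    have e2 : MulAction.stabilizerSubmonoid (FreeProdKer.Gam G k) (1 : ∀ i, G i) ≃*
        MonoidHom.ker (freeProdToPi G k) :=
      { toFun := fun p =>
          ⟨p.val, by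
            have h : (p : FreeProdKer.Gam G k) • (1 : ∀ i, G i) = 1 := p.property
            rw [FreeProdKer.smul_def, mul_one] at h
            exact h⟩
        invFun := fun x =>
          ⟨x.val, by
            show x.val • (1 : ∀ i, G i) = 1
            rw [FreeProdKer.smul_def, mul_one]
            exact x.property⟩
        left_inv := fun _ => rfl
        right_inv := fun _ => rfl
        map_mul' := fun _ _ => rfl }
    have e3 : MulAction.stabilizerSubmonoid (FreeProdKer.Gam G k) (1 : ∀ i, G i) ≃*
        CategoryTheory.End obj :=
      CategoryTheory.ActionCategory.stabilizerIsoEnd (FreeProdKer.Gam G k) (1 : ∀ i, G i)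
    have e4 : @CategoryTheory.End _ CategoryTheory.Groupoid.toCategory.toCategoryStruct obj ≃*
        CategoryTheory.End obj := by
      with_unfolding_all exact { toFun := fun p => p, invFun := fun p => p, left_inv := fun _ => rfl, right_inv := fun _ => rfl, map_mul' := fun _ _ => rfl }
    haveI : IsFreeGroup (MonoidHom.ker (freeProdToPi G k)) :=
      IsFreeGroup.ofMulEquiv (e4.trans (e3.symm.trans e2))
    exact ⟨IsFreeGroup.Generators _, ⟨(IsFreeGroup.toFreeGroup _).symm⟩⟩
end

section
/- Let F be a free group (on an arbitrary generating type), let V be any representation of F over a commutative ring k, and let n ≥ 2. Then the n-th group cohomology of F with coefficients in V vanishes: H^n(F; V) = 0. -/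
universe u

open CategoryTheory Finsupp

noncomputable section FreeGroupRes

variable (k : Type u) [CommRing k] (α : Type u)

local notation "F" => FreeGroup α
local notation "A" => MonoidAlgebra k (FreeGroup α)

/-- left regular representation -/
abbrev P0 : Rep k F := Rep.ofMulAction k (FreeGroup α) (FreeGroup α)

lemma P0_ρ_eq (g : F) (x : A) :
    Representation.ofMulAction k (FreeGroup α) (FreeGroup α) g x
      = MonoidAlgebra.single g 1 * x := by
  induction x using MonoidAlgebra.induction with
  | zero => simp
  | single_add h c x _ _ ih =>
    rw [map_add, mul_add, ih]
    congr 1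
    rw [Representation.ofMulAction_single,
      MonoidAlgebra.single_mul_single, one_mul]
    rfl

/-- The representation on `α →₀ A`. -/
def ρ1 : Representation k (FreeGroup α) (α →₀ MonoidAlgebra k (FreeGroup α)) where
  toFun g := Finsupp.mapRange.linearMap (Representation.ofMulAction k (FreeGroup α) (FreeGroup α) g)
  map_one' := by
    show Finsupp.mapRange.linearMap _ = _
    rw [map_one (Representation.ofMulAction k (FreeGroup α) (FreeGroup α))]
    exact Finsupp.mapRange.linearMap_id
  map_mul' g h := by
    show Finsupp.mapRange.linearMap _ = _
    rw [map_mul (Representation.ofMulAction k (FreeGroup α) (FreeGroup α))]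
    exact Finsupp.mapRange.linearMap_comp _ _

abbrev P1 : Rep k F := Rep.of (ρ1 k α)

lemma ρ1_single (g : F) (a : α) (x : A) :
    ρ1 k α g (Finsupp.single a x) =
      Finsupp.single a (MonoidAlgebra.single g 1 * x) := by
  show Finsupp.mapRange.linearMap _ _ = _
  rw [Finsupp.mapRange.linearMap_apply, Finsupp.mapRange_single]
  rw [← P0_ρ_eq]


/-- augmentation -/
def εhom : MonoidAlgebra k (FreeGroup α) →ₗ[k] k :=
  Finsupp.linearCombination k (fun _ => (1 : k)) ∘ₗ (MonoidAlgebra.coeffLinearEquiv k).toLinearMap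

@[simp] lemma εhom_single (g : F) (c : k) : εhom k α (MonoidAlgebra.single g c) = c := by
  rw [εhom]
  simp only [LinearMap.coe_comp, Function.comp_apply, LinearEquiv.coe_coe,
    MonoidAlgebra.coeffLinearEquiv_apply, MonoidAlgebra.coeff_single]
  erw [Finsupp.linearCombination_single]
  rw [smul_eq_mul, mul_one]

def εRep : P0 k α ⟶ Rep.trivial k (FreeGroup α) k :=
  Rep.ofHom ⟨εhom k α, fun g => by
    refine LinearMap.ext fun x => ?_
    show εhom k α (Representation.ofMulAction k (FreeGroup α) (FreeGroup α) g x) = εhom k α x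
    induction x using MonoidAlgebra.induction with
    | zero => simp
    | single_add h c x _ _ ih =>
      rw [map_add, map_add, map_add, ih]
      congr 1
      rw [P0_ρ_eq, MonoidAlgebra.single_mul_single, one_mul, εhom_single, εhom_single]⟩

/-- the Fox differential `v ↦ ∑ₐ vₐ * (aₐ - 1)` -/
def dhom : (α →₀ MonoidAlgebra k (FreeGroup α)) →ₗ[k] MonoidAlgebra k (FreeGroup α) :=
  Finsupp.lsum k fun a => LinearMap.mulRight k (MonoidAlgebra.single (FreeGroup.of a) 1 - 1)

@[simp] lemma dhom_single (a : α) (x : A) :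
    dhom k α (Finsupp.single a x) = x * (MonoidAlgebra.single (FreeGroup.of a) 1 - 1) := by
  simp [dhom]

lemma dhom_ρ (g : F) (v : α →₀ A) :
    dhom k α (ρ1 k α g v) = MonoidAlgebra.single g 1 * dhom k α v := by
  induction v using Finsupp.induction with
  | zero => simp
  | single_add a x v _ _ ih =>
    rw [map_add, map_add, map_add, ih, ρ1_single, dhom_single, dhom_single, mul_add, mul_assoc]

def dRep : P1 k α ⟶ P0 k α :=
  Rep.ofHom ⟨dhom k α, fun g => by
    refine LinearMap.ext fun v => ?_
    show dhom k α (ρ1 k α g v)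
      = Representation.ofMulAction k (FreeGroup α) (FreeGroup α) g (dhom k α v)
    rw [P0_ρ_eq]
    exact dhom_ρ k α g v⟩

/-- The "affine" group used to define Fox derivatives by the universal property of
the free group. -/
structure Aff where
  m : α →₀ MonoidAlgebra k (FreeGroup α)
  g : FreeGroup α

instance : Group (Aff k α) where
  mul x y := ⟨x.m + ρ1 k α x.g y.m, x.g * y.g⟩
  one := ⟨0, 1⟩
  inv x := ⟨-(ρ1 k α x.g⁻¹ x.m), x.g⁻¹⟩
  mul_assoc x y z := by
    show Aff.mk _ _ = Aff.mk _ _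
    congr 1
    · show x.m + ρ1 k α x.g y.m + ρ1 k α (x.g * y.g) z.m
        = x.m + ρ1 k α x.g (y.m + ρ1 k α y.g z.m)
      rw [map_mul, map_add, add_assoc]
      rfl
    · exact mul_assoc _ _ _
  one_mul x := by
    show Aff.mk (0 + ρ1 k α 1 x.m) (1 * x.g) = x
    rw [map_one (ρ1 k α), zero_add, one_mul]
    rfl
  mul_one x := by
    show Aff.mk (x.m + ρ1 k α x.g 0) (x.g * 1) = x
    rw [map_zero, add_zero, mul_one]
  inv_mul_cancel x := by
    show Aff.mk (-(ρ1 k α x.g⁻¹ x.m) + ρ1 k α x.g⁻¹ x.m) (x.g⁻¹ * x.g) = ⟨0, 1⟩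
    rw [neg_add_cancel, inv_mul_cancel]

lemma Aff.mul_def (x y : Aff k α) :
    x * y = ⟨x.m + ρ1 k α x.g y.m, x.g * y.g⟩ := rfl

/-- The Fox derivative, packaged as a group hom to `Aff`. -/
def gD : FreeGroup α →* Aff k α :=
  FreeGroup.lift fun a => ⟨Finsupp.single a 1, FreeGroup.of a⟩

/-- second projection -/
def π2 : Aff k α →* FreeGroup α where
  toFun x := x.g
  map_one' := rfl
  map_mul' _ _ := rfl

lemma gD_g (g : F) : (gD k α g).g = g := by
  have : (π2 k α).comp (gD k α) = MonoidHom.id (FreeGroup α) := by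
    apply FreeGroup.ext_hom
    intro a
    show (gD k α (FreeGroup.of a)).g = FreeGroup.of a
    rw [gD, FreeGroup.lift_apply_of]
  exact DFunLike.congr_fun this g

/-- The Fox derivative. -/
def D (g : F) : α →₀ MonoidAlgebra k (FreeGroup α) := (gD k α g).m

lemma D_one : D k α 1 = 0 := congrArg Aff.m (map_one (gD k α))

lemma D_of (a : α) : D k α (FreeGroup.of a) = Finsupp.single a 1 :=
  congrArg Aff.m (FreeGroup.lift_apply_of (x := a))

lemma D_mul (g h : F) : D k α (g * h) = D k α g + ρ1 k α g (D k α h) := by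
  have := congrArg Aff.m (map_mul (gD k α) g h)
  rwa [Aff.mul_def, gD_g] at this

lemma D_inv (g : F) : D k α g⁻¹ = -(ρ1 k α g⁻¹ (D k α g)) := by
  have h0 := D_mul k α g⁻¹ g
  rw [inv_mul_cancel, D_one] at h0
  exact eq_neg_of_add_eq_zero_left h0.symm


lemma dhom_D (g : F) :
    dhom k α (D k α g) = MonoidAlgebra.single g 1 - 1 := by
  induction g using FreeGroup.induction_on with
  | C1 =>
    rw [D_one, map_zero, MonoidAlgebra.one_def, sub_self]
  | of a =>
    show dhom k α (D k α (FreeGroup.of a)) = MonoidAlgebra.single (FreeGroup.of a) 1 - 1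
    rw [D_of, dhom_single, one_mul]
  | inv_of a ih =>
    show dhom k α (D k α (FreeGroup.of a)⁻¹)
      = MonoidAlgebra.single (FreeGroup.of a)⁻¹ 1 - 1
    have ih' : dhom k α (D k α (FreeGroup.of a))
        = MonoidAlgebra.single (FreeGroup.of a) 1 - 1 := ih
    rw [D_inv, map_neg, dhom_ρ, ih', mul_sub, MonoidAlgebra.single_mul_single,
      inv_mul_cancel, mul_one, mul_one, ← MonoidAlgebra.one_def, neg_sub]
  | mul g h ihg ihh =>
    rw [D_mul, map_add, dhom_ρ, ihg, ihh, mul_sub, MonoidAlgebra.single_mul_single,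
      mul_one, mul_one, sub_add_sub_cancel']

/-- The linear extension of the Fox derivative. -/
def Φ : MonoidAlgebra k (FreeGroup α) →ₗ[k] (α →₀ MonoidAlgebra k (FreeGroup α)) :=
  Finsupp.linearCombination k (D k α) ∘ₗ (MonoidAlgebra.coeffLinearEquiv k).toLinearMap

lemma Φ_single (g : F) (c : k) : Φ k α (MonoidAlgebra.single g c) = c • D k α g := by
  rw [Φ]
  simp only [LinearMap.coe_comp, Function.comp_apply, LinearEquiv.coe_coe,
    MonoidAlgebra.coeffLinearEquiv_apply, MonoidAlgebra.coeff_single]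
  erw [Finsupp.linearCombination_single]

lemma dhom_Φ (x : A) :
    dhom k α (Φ k α x) = x - εhom k α x • 1 := by
  induction x using MonoidAlgebra.induction with
  | zero => simp
  | single_add g c x _ _ ih =>
    rw [map_add, map_add, map_add, ih, Φ_single, map_smul, dhom_D, εhom_single,
      smul_sub, add_smul, MonoidAlgebra.smul_single, smul_eq_mul, mul_one, sub_add_sub_comm]

lemma Φ_dhom_single (a : α) (x : A) :
    Φ k α (dhom k α (Finsupp.single a x)) = Finsupp.single a x := by
  induction x using MonoidAlgebra.induction with
  | zero => simp
  | single_add g c x _ _ ih =>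
    rw [Finsupp.single_add, map_add, map_add, ih]
    congr 1
    rw [dhom_single, mul_sub, mul_one, MonoidAlgebra.single_mul_single, mul_one, map_sub,
      Φ_single, Φ_single, D_mul, smul_add, add_sub_cancel_left]
    have h1 : ρ1 k α g (D k α (FreeGroup.of a))
        = Finsupp.single a (MonoidAlgebra.single g 1) := by
      rw [D_of, ρ1_single, mul_one]
    rw [h1, Finsupp.smul_single, MonoidAlgebra.smul_single, smul_eq_mul, mul_one]

lemma Φ_dhom (v : α →₀ A) : Φ k α (dhom k α v) = v := by
  induction v using Finsupp.induction with
  | zero => simp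
  | single_add a x v _ _ ih =>
    rw [map_add, map_add, ih, Φ_dhom_single]

lemma εhom_dhom (v : α →₀ A) : εhom k α (dhom k α v) = 0 := by
  have h := dhom_Φ k α (dhom k α v)
  rw [Φ_dhom] at h
  have h' : (εhom k α) ((dhom k α) v) • (1 : A) = 0 := sub_eq_self.mp h.symm
  have h2 : (εhom k α) ((dhom k α) v) • (1 : A) =
      MonoidAlgebra.single (1 : FreeGroup α) ((εhom k α) ((dhom k α) v)) := by
    rw [MonoidAlgebra.one_def, MonoidAlgebra.smul_single, smul_eq_mul, mul_one]
  rw [h2] at h'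
  exact (MonoidAlgebra.single_eq_zero).1 h'


open Limits ZeroObject

/-- `P0` is projective: it is the image of a free module. -/
instance P0_projective : Projective (P0 k α) :=
  Rep.equivalenceModuleMonoidAlgebra.toAdjunction.projective_of_map_projective _ <|
    @ModuleCat.projective_of_free.{u} _ _
      (ModuleCat.of (MonoidAlgebra k (FreeGroup α))
        (Representation.ofMulAction k (FreeGroup α) (FreeGroup α)).asModule) PUnit.{u+1}
      ((Module.Basis.singleton PUnit.{u+1} (MonoidAlgebra k (FreeGroup α))).map
        (Representation.ofMulActionSelfAsModuleEquiv (k := k) (G := FreeGroup α)).symm)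

lemma ρ1_asAlgebraHom (r : A) (v : α →₀ A) (a : α) :
    Representation.asAlgebraHom (ρ1 k α) r v a = r * v a := by
  induction r using MonoidAlgebra.induction with
  | zero => simp
  | single_add g c r _ _ ih =>
    rw [map_add, LinearMap.add_apply, Finsupp.add_apply, ih, add_mul]
    congr 1
    rw [Representation.asAlgebraHom_single, LinearMap.smul_apply, Finsupp.smul_apply]
    have : (ρ1 k α g v) a = MonoidAlgebra.single g 1 * v a := by
      show Finsupp.mapRange.linearMap _ v a = _
      rw [Finsupp.mapRange.linearMap_apply, Finsupp.mapRange_apply]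
      exact P0_ρ_eq k α g (v a)
    rw [this, ← smul_mul_assoc, MonoidAlgebra.smul_single, smul_eq_mul, mul_one]

/-- `(α →₀ A)` with the representation `ρ1`, as a module over the monoid algebra,
is isomorphic to the free module `α →₀ A`. -/
def e1 : (α →₀ MonoidAlgebra k (FreeGroup α)) ≃ₗ[MonoidAlgebra k (FreeGroup α)]
    (ρ1 k α).asModule where
  __ := (Representation.asModuleEquiv (ρ1 k α)).symm
  map_smul' r v := by
    apply (Representation.asModuleEquiv (ρ1 k α)).injective
    rw [Representation.asModuleEquiv_map_smul]
    change r • v = (ρ1 k α).asAlgebraHom ((RingHom.id _) r) v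
    refine Finsupp.ext fun a => ?_
    rw [Finsupp.smul_apply, ρ1_asAlgebraHom, smul_eq_mul, RingHom.id_apply]

instance P1_projective : Projective (P1 k α) :=
  Rep.equivalenceModuleMonoidAlgebra.toAdjunction.projective_of_map_projective _ <|
    @ModuleCat.projective_of_free.{u} _ _
      (ModuleCat.of (MonoidAlgebra k (FreeGroup α)) (ρ1 k α).asModule) α
      (Finsupp.basisSingleOne.map (e1 k α))

lemma d_comp_ε : dRep k α ≫ εRep k α = 0 := by
  refine Rep.hom_ext (Representation.IntertwiningMap.ext (LinearMap.ext fun v => ?_))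
  exact εhom_dhom k α v

lemma mono_dRep : Mono (dRep k α) := by
  apply (forget₂ (Rep k (FreeGroup α)) (ModuleCat k)).mono_of_mono_map
  show Mono ((forget₂ (Rep k (FreeGroup α)) (ModuleCat k)).map (dRep k α))
  rw [ModuleCat.mono_iff_injective]
  exact Function.LeftInverse.injective (Φ_dhom k α)

lemma epi_εRep : Epi (εRep k α) := by
  apply (forget₂ (Rep k (FreeGroup α)) (ModuleCat k)).epi_of_epi_map
  show Epi ((forget₂ (Rep k (FreeGroup α)) (ModuleCat k)).map (εRep k α))
  rw [ModuleCat.epi_iff_surjective]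
  intro c
  exact ⟨MonoidAlgebra.single 1 c, εhom_single k α 1 c⟩

lemma exact_d_ε : (ShortComplex.mk (dRep k α) (εRep k α) (d_comp_ε k α)).Exact := by
  rw [← ShortComplex.exact_map_iff_of_faithful _ (forget₂ (Rep k (FreeGroup α)) (ModuleCat k))]
  rw [ShortComplex.moduleCat_exact_iff]
  intro x hx
  refine ⟨Φ k α x, ?_⟩
  have hε : εhom k α x = 0 := hx
  have h := dhom_Φ k α x
  simp only [hε, zero_smul] at h
  exact h.trans (@sub_zero (MonoidAlgebra k (FreeGroup α)) _ x)

/-- The length-one complex `(α →₀ A) → A`. -/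
def myComplex : ChainComplex (Rep k (FreeGroup α)) ℕ :=
  ChainComplex.mk' (P0 k α) (P1 k α) (dRep k α) (fun _ => ⟨0, 0, zero_comp⟩)

lemma myComplex_d_1_0 : (myComplex k α).d 1 0 = dRep k α := by
  simp [myComplex]

lemma myComplex_isZero (n : ℕ) : IsZero ((myComplex k α).X (n + 2)) := by
  induction n with
  | zero => exact isZero_zero _
  | succ n _ => exact isZero_zero _

lemma myComplex_exactAt_succ (n : ℕ) : (myComplex k α).ExactAt (n + 1) := by
  rw [HomologicalComplex.exactAt_iff' _ (n + 1 + 1) (n + 1) n (by simp) (by simp)]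
  match n with
  | 0 =>
    have hf : ((myComplex k α).sc' 2 1 0).f = 0 :=
      (myComplex_isZero k α 0).eq_of_src _ _
    rw [ShortComplex.exact_iff_mono _ hf]
    show Mono ((myComplex k α).d 1 0)
    rw [myComplex_d_1_0]
    exact mono_dRep k α
  | n + 1 =>
    exact ShortComplex.exact_of_isZero_X₂ _ (myComplex_isZero k α n)

/-- The free resolution of the trivial representation of a free group. -/
def myRes : ProjectiveResolution (Rep.trivial k (FreeGroup α) k) where
  complex := myComplex k α
  projective n := by
    match n with
    | 0 => exact P0_projective k α
    | 1 => exact P1_projective k α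
    | (n + 2) =>
      exact ⟨fun f e _ => ⟨0, by rw [zero_comp]; exact ((myComplex_isZero k α n).eq_of_src f 0).symm⟩⟩
  π := (ChainComplex.toSingle₀Equiv _ _).symm
    ⟨εRep k α, by rw [myComplex_d_1_0]; exact d_comp_ε k α⟩
  quasiIso := ⟨fun n => by
    cases n with
    | zero =>
      rw [ChainComplex.quasiIsoAt₀_iff, ShortComplex.quasiIso_iff_of_zeros']
      · refine (ShortComplex.exact_and_epi_g_iff_of_iso ?_).2
          ⟨exact_d_ε k α, epi_εRep k α⟩
        refine ShortComplex.isoMk (Iso.refl _) (Iso.refl _) (Iso.refl _) ?_ ?_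
        · simp [myComplex]
          erw [Category.id_comp]
        · erw [Category.id_comp]
      all_goals rfl
    | succ n =>
      rw [quasiIsoAt_iff_exactAt']
      · apply myComplex_exactAt_succ
      · apply ChainComplex.exactAt_succ_single_obj⟩

end FreeGroupRes

/-- A free group has cohomological dimension at most `1`: for any representation `V` of a free
group `F` over a commutative ring `k` and any `n ≥ 2`, the group cohomology `Hⁿ(F; V)`
vanishes. -/
theorem groupCohomology_freeGroup_isZero_of_two_le
    {k : Type u} [CommRing k] {α : Type u} (V : Rep k (FreeGroup α))
    (n : ℕ) (hn : 2 ≤ n) :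
    Limits.IsZero (groupCohomology V n) := by
  obtain ⟨m, rfl⟩ : ∃ m, n = m + 2 := ⟨n - 2, by omega⟩
  refine Limits.IsZero.of_iso ?_
    ((groupCohomologyIsoExt V (m + 2)) ≪≫ ((myRes k α).isoExt (m + 2) V))
  rw [← HomologicalComplex.exactAt_iff_isZero_homology, HomologicalComplex.exactAt_iff]
  refine ShortComplex.exact_of_isZero_X₂ _ ?_
  rw [Limits.IsZero.iff_id_eq_zero]
  ext (x : _ ⟶ _)
  obtain rfl : x = 0 := (myComplex_isZero k α m).eq_of_src _ _
  rfl
end
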